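/- The subspace of the incidence algebra A(NCP(n), |) consisting of those functions f for which there exists a function F on NCP(n) with f(α, β) = F(K_β(α)) for all α | β, is a subalgebra under the convolution product (the reduced incidence algebra); explicitly, if f(α,β) = F(K_β(α)) and g(α,β) = G(K_β(α)), then (f ∗ g)(α, β) = Σ_{0_n | φ | K_β(α)} F(φ) G(K_{K_β(α)}(φ)), which depends only on K_β(α). -/

import Mathlib

open scoped BigOperators

/-- A partition (setoid) of `Fin N` is noncrossing if there are no
`a < b < c < d` with `a ~ c`, `b ~ d` but `a ≁ b`. -/
def IsNoncrossing {N : ℕ} (π : Setoid (Fin N)) : Prop :=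
  ∀ a b c d : Fin N, a < b → b < c → c < d → π a c → π b d → π a b

/-- The set of noncrossing partitions of `[N] = {1,…,N}`, modelled as
noncrossing setoids on `Fin N`. -/
abbrev NCP (N : ℕ) : Type := {π : Setoid (Fin N) // IsNoncrossing π}

theorem bot_isNoncrossing (N : ℕ) : IsNoncrossing (⊥ : Setoid (Fin N)) := by
  intro a b c d hab hbc hcd hac _
  have h : a = c := by
    have := Setoid.bot_def (α := Fin N)
    exact by rw [show ((⊥ : Setoid (Fin N)) : Fin N → Fin N → Prop) = (· = ·) from this] at hac; exact hac
  exact absurd (h ▸ (hab.trans hbc)) (lt_irrefl a)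

theorem top_isNoncrossing (N : ℕ) : IsNoncrossing (⊤ : Setoid (Fin N)) := by
  intro a b c d _ _ _ _ _
  show (⊤ : Setoid (Fin N)) a b
  rw [show ((⊤ : Setoid (Fin N)) : Fin N → Fin N → Prop) = ⊤ from Setoid.top_def]
  trivial

theorem inf_isNoncrossing {N : ℕ} {π μ : Setoid (Fin N)}
    (hπ : IsNoncrossing π) (hμ : IsNoncrossing μ) : IsNoncrossing (π ⊓ μ) := by
  intro a b c d hab hbc hcd hac hbd
  have hac' : π a c ∧ μ a c := by
    rw [show ((π ⊓ μ : Setoid (Fin N)) : Fin N → Fin N → Prop) = ⇑π ⊓ ⇑μ from Setoid.inf_def] at hac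
    exact hac
  have hbd' : π b d ∧ μ b d := by
    rw [show ((π ⊓ μ : Setoid (Fin N)) : Fin N → Fin N → Prop) = ⇑π ⊓ ⇑μ from Setoid.inf_def] at hbd
    exact hbd
  show (π ⊓ μ) a b
  rw [show ((π ⊓ μ : Setoid (Fin N)) : Fin N → Fin N → Prop) = ⇑π ⊓ ⇑μ from Setoid.inf_def]
  exact ⟨hπ a b c d hab hbc hcd hac'.1 hbd'.1, hμ a b c d hab hbc hcd hac'.2 hbd'.2⟩

/-- The join of two partitions in the lattice of noncrossing partitions:
the finest noncrossing partition coarser than both. -/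
def ncSup {N : ℕ} (π μ : Setoid (Fin N)) : Setoid (Fin N) :=
  sInf {γ : Setoid (Fin N) | IsNoncrossing γ ∧ π ≤ γ ∧ μ ≤ γ}

theorem ncSup_isNoncrossing {N : ℕ} (π μ : Setoid (Fin N)) : IsNoncrossing (ncSup π μ) := by
  intro a b c d hab hbc hcd hac hbd
  change (sInf {γ : Setoid (Fin N) | IsNoncrossing γ ∧ π ≤ γ ∧ μ ≤ γ}) a c at hac
  change (sInf {γ : Setoid (Fin N) | IsNoncrossing γ ∧ π ≤ γ ∧ μ ≤ γ}) b d at hbd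
  change (sInf {γ : Setoid (Fin N) | IsNoncrossing γ ∧ π ≤ γ ∧ μ ≤ γ}) a b
  rw [Setoid.sInf_iff] at hac hbd ⊢
  intro γ hγ
  exact hγ.1 a b c d hab hbc hcd (hac γ hγ) (hbd γ hγ)

noncomputable instance NCP.instLattice (N : ℕ) : Lattice (NCP N) :=
  { (inferInstance : PartialOrder (NCP N)) with
    sup := fun α β => ⟨ncSup α.1 β.1, ncSup_isNoncrossing _ _⟩
    inf := fun α β => ⟨α.1 ⊓ β.1, inf_isNoncrossing α.2 β.2⟩
    le_sup_left := fun α β => by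
      show α.1 ≤ ncSup α.1 β.1
      exact le_sInf fun γ hγ => hγ.2.1
    le_sup_right := fun α β => by
      show β.1 ≤ ncSup α.1 β.1
      exact le_sInf fun γ hγ => hγ.2.2
    sup_le := fun α β γ h1 h2 => by
      show ncSup α.1 β.1 ≤ γ.1
      exact sInf_le ⟨γ.2, h1, h2⟩
    inf_le_left := fun α β => by
      show α.1 ⊓ β.1 ≤ α.1
      exact inf_le_left
    inf_le_right := fun α β => by
      show α.1 ⊓ β.1 ≤ β.1
      exact inf_le_right
    le_inf := fun α β γ h1 h2 => by
      show α.1 ≤ β.1 ⊓ γ.1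
      exact le_inf h1 h2 }

instance NCP.instOrderBot (N : ℕ) : OrderBot (NCP N) where
  bot := ⟨⊥, bot_isNoncrossing N⟩
  bot_le := fun α => by
    show (⊥ : Setoid (Fin N)) ≤ α.1
    exact bot_le

instance NCP.instOrderTop (N : ℕ) : OrderTop (NCP N) where
  top := ⟨⊤, top_isNoncrossing N⟩
  le_top := fun α => by
    show α.1 ≤ (⊤ : Setoid (Fin N))
    exact le_top

/-- The disjoint sum of two setoids: elements are related iff they lie on
the same side and are related there. -/
def sumSetoid {A B : Type*} (α : Setoid A) (β : Setoid B) : Setoid (A ⊕ B) where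
  r x y := match x, y with
    | Sum.inl a, Sum.inl a' => α a a'
    | Sum.inr b, Sum.inr b' => β b b'
    | _, _ => False
  iseqv := by
    constructor
    · intro x
      cases x with
      | inl a => exact α.refl' a
      | inr b => exact β.refl' b
    · intro x y h
      cases x <;> cases y <;>
        first
          | exact α.symm' h
          | exact β.symm' h
          | exact h.elim
    · intro x y z h1 h2
      cases x <;> cases y <;> cases z <;>
        first
          | exact α.trans' h1 h2
          | exact β.trans' h1 h2
          | exact h1.elim
          | exact h2.elim

/-- Decoding map for the `n`-perfect shuffle of a partition of `[n]`
(placed on odd positions) and a partition of `[n]` (placed on even positions). -/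
def decode2 (n : ℕ) (x : Fin (2*n)) : Fin n ⊕ Fin n :=
  if (x : ℕ) % 2 = 0 then Sum.inl ⟨(x:ℕ)/2, by have := x.isLt; omega⟩
  else Sum.inr ⟨(x:ℕ)/2, by have := x.isLt; omega⟩

/-- The `n`-perfect shuffle `α ∗_n β` of two partitions of `[n]`, a partition
of `[2n]`. -/
def shuffle2 {n : ℕ} (α β : Setoid (Fin n)) : Setoid (Fin (2*n)) :=
  Setoid.comap (decode2 n) (sumSetoid α β)

/-- The pair `(α, β)` is `n`-admissible if the `n`-perfect shuffle `α ∗_n β`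
is noncrossing. -/
def Admissible2 {n : ℕ} (α β : NCP n) : Prop := IsNoncrossing (shuffle2 α.1 β.1)

/-- The `p`-th power of a partition of `[n]`: each element is replicated `p`
times, all replicas being put in the same block. -/
def powSetoid (p : ℕ) {n : ℕ} (π : Setoid (Fin n)) : Setoid (Fin (p*n)) :=
  Setoid.comap (fun x : Fin (p*n) =>
    (⟨(x:ℕ)/p, by
        have hx := x.isLt
        rcases Nat.eq_zero_or_pos p with h|h
        · subst h; exact absurd hx (by omega)
        · exact Nat.div_lt_of_lt_mul hx⟩ : Fin n)) π

theorem isNoncrossing_comap_of_monotone {M N : ℕ} (f : Fin M → Fin N) (hf : Monotone f)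
    {π : Setoid (Fin N)} (hπ : IsNoncrossing π) : IsNoncrossing (Setoid.comap f π) := by
  intro a b c d hab hbc hcd hac hbd
  have h1 : f a ≤ f b := hf hab.le
  have h2 : f b ≤ f c := hf hbc.le
  have h3 : f c ≤ f d := hf hcd.le
  show π (f a) (f b)
  have hac' : π (f a) (f c) := hac
  have hbd' : π (f b) (f d) := hbd
  rcases eq_or_lt_of_le h1 with e1 | l1
  · rw [← e1]
  · rcases eq_or_lt_of_le h2 with e2 | l2
    · rw [e2]; exact hac'
    · rcases eq_or_lt_of_le h3 with e3 | l3
      · rw [← e3] at hbd'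
        exact π.trans' hac' (π.symm' hbd')
      · exact hπ (f a) (f b) (f c) (f d) l1 l2 l3 hac' hbd'

theorem powSetoid_isNoncrossing (p : ℕ) {n : ℕ} (π : NCP n) :
    IsNoncrossing (powSetoid p π.1) :=
  isNoncrossing_comap_of_monotone _ (fun x y h => by
    simp only [Fin.mk_le_mk]
    exact Nat.div_le_div_right h) π.2

/-- The `p`-th power map `NCP n → NCP (p·n)`. -/
def npow (p : ℕ) {n : ℕ} (π : NCP n) : NCP (p*n) := ⟨powSetoid p π.1, powSetoid_isNoncrossing p π⟩

open Classical in
/-- The `p`-th root `π^{1/p}` of a partition of `[pn]`: the unique preimage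
under the `p`-th power map when it exists (junk value `⊥` otherwise). -/
noncomputable def nroot (p n : ℕ) (π : Setoid (Fin (p*n))) : NCP n :=
  if h : ∃ σ : NCP n, (npow p σ).1 = π then h.choose else ⊥

/-- The interval partition `{{1,…,p},{p+1,…,2p},…,{pn−p+1,…,pn}}` of `[pn]`. -/
def intervalSetoid (p n : ℕ) : Setoid (Fin (p*n)) :=
  Setoid.ker (fun x : Fin (p*n) => (x:ℕ)/p)

theorem intervalSetoid_isNoncrossing (p n : ℕ) : IsNoncrossing (intervalSetoid p n) := by
  intro a b c d hab hbc hcd hac _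
  have h1 : (a:ℕ)/p = (c:ℕ)/p := hac
  have h2 : (a:ℕ)/p ≤ (b:ℕ)/p := Nat.div_le_div_right (le_of_lt hab)
  have h3 : (b:ℕ)/p ≤ (c:ℕ)/p := Nat.div_le_div_right (le_of_lt hbc)
  show (a:ℕ)/p = (b:ℕ)/p
  exact le_antisymm h2 (by rw [h1]; exact h3)

/-- The interval partition as a noncrossing partition. -/
def intervalNCP (p n : ℕ) : NCP (p*n) := ⟨intervalSetoid p n, intervalSetoid_isNoncrossing p n⟩

/-- The composition product `α ∘ β := ((α ⧢_n β) ∨ {{1,2},…,{2n−1,2n}})^{1/2}`,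
defined (meaningfully) on `n`-admissible pairs. -/
noncomputable def comp {n : ℕ} (α β : NCP n) : NCP n :=
  nroot 2 n (ncSup (shuffle2 α.1 β.1) (intervalSetoid 2 n))

open Classical in
/-- The Kreweras complement: the unique `γ` with `(α, γ)` admissible and
`α ∘ γ = 1_n`. -/
noncomputable def kreweras {n : ℕ} (α : NCP n) : NCP n :=
  if h : ∃ γ : NCP n, Admissible2 α γ ∧ comp α γ = ⊤ then h.choose else ⊥

open Classical in
/-- The relative Kreweras complement `K_β(α)`: the unique `γ` with `(α, γ)`
admissible and `α ∘ γ = β`. -/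
noncomputable def relKreweras {n : ℕ} (β α : NCP n) : NCP n :=
  if h : ∃ γ : NCP n, Admissible2 α γ ∧ comp α γ = β then h.choose else ⊥

/-- Iterated (left-associated) composition product `α_1 ∘ ⋯ ∘ α_k`. -/
noncomputable def compTuple {n : ℕ} : {k : ℕ} → (Fin k → NCP n) → NCP n
  | 0, _ => ⊥
  | k+1, α => comp (compTuple (fun i : Fin k => α i.castSucc)) (α (Fin.last k))

/-- The `k`-fold `n`-perfect shuffle `α_1 ∗_n ⋯ ∗_n α_k` of `k` partitions of `[n]`,
a partition of `[kn]`. -/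
def eqShuffle (n k : ℕ) (α : Fin k → Setoid (Fin n)) : Setoid (Fin (k*n)) where
  r x y := ∃ i : Fin k, ((x:ℕ) % k = (i:ℕ)) ∧ ((y:ℕ) % k = (i:ℕ)) ∧
      (α i) ⟨(x:ℕ)/k, Nat.div_lt_of_lt_mul x.isLt⟩ ⟨(y:ℕ)/k, Nat.div_lt_of_lt_mul y.isLt⟩
  iseqv := by
    constructor
    · intro x
      have h0 : 0 < k * n := lt_of_le_of_lt (Nat.zero_le _) x.isLt
      have hk : 0 < k := by
        rcases Nat.eq_zero_or_pos k with h|h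
        · subst h; rw [Nat.zero_mul] at h0; exact absurd h0 (lt_irrefl 0)
        · exact h
      exact ⟨⟨(x:ℕ) % k, Nat.mod_lt _ hk⟩, rfl, rfl, (α _).refl' _⟩
    · rintro x y ⟨i, h1, h2, h3⟩
      exact ⟨i, h2, h1, (α i).symm' h3⟩
    · rintro x y z ⟨i, h1, h2, h3⟩ ⟨j, h4, h5, h6⟩
      obtain rfl : i = j := Fin.ext (by rw [← h2, h4])
      exact ⟨i, h1, h5, (α i).trans' h3 h6⟩

/-- A `k`-tuple of noncrossing partitions of `[n]` is `n`-admissible if its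
`k`-fold perfect shuffle is noncrossing. -/
def AdmissibleTuple (n k : ℕ) (α : Fin k → NCP n) : Prop :=
  IsNoncrossing (eqShuffle n k fun i => (α i).1)

section KrewDev
open Classical

variable {n : ℕ}

/-- Noncrossing closure of a setoid. -/
def nccS {n : ℕ} (ρ : Setoid (Fin n)) : Setoid (Fin n) :=
  sInf {σ : Setoid (Fin n) | IsNoncrossing σ ∧ ρ ≤ σ}

theorem nccS_isNoncrossing (ρ : Setoid (Fin n)) : IsNoncrossing (nccS ρ) := by
  intro a b c d hab hbc hcd hac hbd
  change (sInf {σ : Setoid (Fin n) | IsNoncrossing σ ∧ ρ ≤ σ}) a c at hac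
  change (sInf {σ : Setoid (Fin n) | IsNoncrossing σ ∧ ρ ≤ σ}) b d at hbd
  change (sInf {σ : Setoid (Fin n) | IsNoncrossing σ ∧ ρ ≤ σ}) a b
  rw [Setoid.sInf_iff] at hac hbd ⊢
  intro σ hσ
  exact hσ.1 a b c d hab hbc hcd (hac σ hσ) (hbd σ hσ)

theorem le_nccS (ρ : Setoid (Fin n)) : ρ ≤ nccS ρ :=
  le_sInf fun _ hσ => hσ.2

theorem nccS_le {ρ σ : Setoid (Fin n)} (h1 : IsNoncrossing σ) (h2 : ρ ≤ σ) : nccS ρ ≤ σ :=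
  sInf_le ⟨h1, h2⟩

theorem nccS_mono {ρ ρ' : Setoid (Fin n)} (h : ρ ≤ ρ') : nccS ρ ≤ nccS ρ' :=
  nccS_le (nccS_isNoncrossing _) (le_trans h (le_nccS _))

theorem nccS_eq_self {σ : Setoid (Fin n)} (h : IsNoncrossing σ) : nccS σ = σ :=
  le_antisymm (nccS_le h le_rfl) (le_nccS _)

theorem nccS_sup_right (a b : Setoid (Fin n)) : nccS (a ⊔ nccS b) = nccS (a ⊔ b) := by
  refine le_antisymm ?_ (nccS_mono (sup_le_sup_left (le_nccS b) a))
  refine nccS_le (nccS_isNoncrossing _) (sup_le ?_ ?_)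
  · exact le_trans le_sup_left (le_nccS _)
  · exact nccS_le (nccS_isNoncrossing _) (le_trans le_sup_right (le_nccS _))

theorem nccS_sup_left (a b : Setoid (Fin n)) : nccS (nccS a ⊔ b) = nccS (a ⊔ b) := by
  rw [sup_comm, nccS_sup_right, sup_comm]

/-- Even position of `a`. -/
def evp (a : Fin n) : Fin (2*n) := ⟨2*(a:ℕ), by have := a.isLt; omega⟩

/-- Odd position of `a`. -/
def odp (a : Fin n) : Fin (2*n) := ⟨2*(a:ℕ)+1, by have := a.isLt; omega⟩

theorem decode2_evp (a : Fin n) : decode2 n (evp a) = Sum.inl a := by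
  unfold decode2
  have hv : ((evp a : Fin (2*n)) : ℕ) = 2*(a:ℕ) := rfl
  split_ifs with h
  · congr 1
    exact Fin.ext (show ((evp a : Fin (2*n)) : ℕ)/2 = (a:ℕ) by omega)
  · exact absurd (by omega) h

theorem decode2_odp (a : Fin n) : decode2 n (odp a) = Sum.inr a := by
  unfold decode2
  have hv : ((odp a : Fin (2*n)) : ℕ) = 2*(a:ℕ)+1 := rfl
  split_ifs with h
  · omega
  · congr 1
    exact Fin.ext (show ((odp a : Fin (2*n)) : ℕ)/2 = (a:ℕ) by omega)

theorem shuffle2_evp_evp {α γ : Setoid (Fin n)} {a b : Fin n} :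
    (shuffle2 α γ) (evp a) (evp b) ↔ α a b := by
  show (sumSetoid α γ) (decode2 n (evp a)) (decode2 n (evp b)) ↔ α a b
  rw [decode2_evp, decode2_evp]
  exact Iff.rfl

theorem shuffle2_odp_odp {α γ : Setoid (Fin n)} {a b : Fin n} :
    (shuffle2 α γ) (odp a) (odp b) ↔ γ a b := by
  show (sumSetoid α γ) (decode2 n (odp a)) (decode2 n (odp b)) ↔ γ a b
  rw [decode2_odp, decode2_odp]
  exact Iff.rfl

theorem shuffle2_evp_odp {α γ : Setoid (Fin n)} {a b : Fin n} :
    ¬ (shuffle2 α γ) (evp a) (odp b) := by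
  show ¬ (sumSetoid α γ) (decode2 n (evp a)) (decode2 n (odp b))
  rw [decode2_evp, decode2_odp]
  exact fun h => h

theorem shuffle2_odp_evp {α γ : Setoid (Fin n)} {a b : Fin n} :
    ¬ (shuffle2 α γ) (odp a) (evp b) := by
  show ¬ (sumSetoid α γ) (decode2 n (odp a)) (decode2 n (evp b))
  rw [decode2_odp, decode2_evp]
  exact fun h => h

/-- Half of a position. -/
def halfp (z : Fin (2*n)) : Fin n := ⟨(z:ℕ)/2, by have h := z.isLt; omega⟩

/-- Every position is an even or odd position of its half. -/
theorem evp_or_odp (z : Fin (2*n)) : z = evp (halfp z) ∨ z = odp (halfp z) := by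
  rcases Nat.mod_two_eq_zero_or_one (z:ℕ) with h | h
  · left; exact Fin.ext (show (z:ℕ) = 2*((z:ℕ)/2) by omega)
  · right; exact Fin.ext (show (z:ℕ) = 2*((z:ℕ)/2)+1 by omega)

/-- The "no `α`-class separates the interval `(x,y]`" condition. -/
def cleanCond (α : Setoid (Fin n)) (x y : Fin n) : Prop :=
  ∀ a b : Fin n, α a b →
    ((((a:ℕ) ≤ (x:ℕ)) ↔ ((a:ℕ) ≤ (y:ℕ))) ↔ (((b:ℕ) ≤ (x:ℕ)) ↔ ((b:ℕ) ≤ (y:ℕ))))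

theorem cleanCond_refl (α : Setoid (Fin n)) (x : Fin n) : cleanCond α x x :=
  fun _ _ _ => by tauto

theorem cleanCond_symm {α : Setoid (Fin n)} {x y : Fin n} (h : cleanCond α x y) :
    cleanCond α y x := fun a b hab => by have := h a b hab; tauto

theorem cleanCond_trans {α : Setoid (Fin n)} {x y z : Fin n} (h1 : cleanCond α x y)
    (h2 : cleanCond α y z) : cleanCond α x z := fun a b hab => by
  have := h1 a b hab; have := h2 a b hab; tauto

/-- Explicit relative Kreweras complement setoid. -/
def krewS (α β : Setoid (Fin n)) : Setoid (Fin n) where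
  r x y := β x y ∧ cleanCond α x y
  iseqv := by
    refine ⟨fun x => ⟨β.refl' x, cleanCond_refl α x⟩, ?_, ?_⟩
    · rintro x y ⟨h1, h2⟩; exact ⟨β.symm' h1, cleanCond_symm h2⟩
    · rintro x y z ⟨h1, h2⟩ ⟨h3, h4⟩; exact ⟨β.trans' h1 h3, cleanCond_trans h2 h4⟩

theorem krewS_rel {α β : Setoid (Fin n)} {x y : Fin n} :
    (krewS α β) x y ↔ β x y ∧ cleanCond α x y := Iff.rfl

theorem krewS_isNoncrossing {α β : Setoid (Fin n)} (hβ : IsNoncrossing β) :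
    IsNoncrossing (krewS α β) := by
  intro a b c d hab hbc hcd hac hbd
  refine ⟨hβ a b c d hab hbc hcd hac.1 hbd.1, ?_⟩
  intro p q hpq
  have h1 := hac.2 p q hpq
  have h2 := hbd.2 p q hpq
  have hab' : (a:ℕ) < b := hab
  have hbc' : (b:ℕ) < c := hbc
  have hcd' : (c:ℕ) < d := hcd
  omega

end KrewDev
section KrewDev2
variable {n : ℕ}

theorem halfp_val (x : Fin (2*n)) : ((halfp x : Fin n) : ℕ) = (x:ℕ)/2 := rfl

theorem shuffle2_cases {α γ : Setoid (Fin n)} {x y : Fin (2*n)} (h : (shuffle2 α γ) x y) :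
    ((x:ℕ)%2 = 0 ∧ (y:ℕ)%2 = 0 ∧ α (halfp x) (halfp y)) ∨
    ((x:ℕ)%2 = 1 ∧ (y:ℕ)%2 = 1 ∧ γ (halfp x) (halfp y)) := by
  have h' : (sumSetoid α γ) (decode2 n x) (decode2 n y) := h
  unfold decode2 at h'
  split_ifs at h' with h1 h2 h2
  · exact Or.inl ⟨h1, h2, h'⟩
  · exact h'.elim
  · exact h'.elim
  · exact Or.inr ⟨by omega, by omega, h'⟩

theorem shuffle2_mk_even {α γ : Setoid (Fin n)} {x y : Fin (2*n)} (hx : (x:ℕ)%2 = 0)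
    (hy : (y:ℕ)%2 = 0) (h : α (halfp x) (halfp y)) : (shuffle2 α γ) x y := by
  show (sumSetoid α γ) (decode2 n x) (decode2 n y)
  unfold decode2
  rw [if_pos hx, if_pos hy]
  exact h

theorem shuffle2_mk_odd {α γ : Setoid (Fin n)} {x y : Fin (2*n)} (hx : (x:ℕ)%2 = 1)
    (hy : (y:ℕ)%2 = 1) (h : γ (halfp x) (halfp y)) : (shuffle2 α γ) x y := by
  show (sumSetoid α γ) (decode2 n x) (decode2 n y)
  unfold decode2
  rw [if_neg (by omega), if_neg (by omega)]
  exact h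

theorem admissible_of_clean {φ ψ : NCP n} {g : Setoid (Fin n)} (hφ : φ.1 ≤ g)
    (hψ : ∀ {w v : Fin n}, ψ.1 w v → cleanCond g w v) : Admissible2 φ ψ := by
  intro A B C D hAB hBC hCD hAC hBD
  have hab : (A:ℕ) < B := hAB
  have hbc : (B:ℕ) < C := hBC
  have hcd : (C:ℕ) < D := hCD
  rcases shuffle2_cases hAC with ⟨hA, hC, hac⟩ | ⟨hA, hC, hac⟩ <;>
    rcases shuffle2_cases hBD with ⟨hB, hD, hbd⟩ | ⟨hB, hD, hbd⟩
  · -- all even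
    refine shuffle2_mk_even hA hB (φ.2 _ _ _ _ ?_ ?_ ?_ hac hbd) <;>
      · rw [Fin.lt_def, halfp_val, halfp_val]; omega
  · -- A C even, B D odd
    exfalso
    have hcl := hψ hbd (halfp A) (halfp C) (hφ hac)
    rw [halfp_val, halfp_val, halfp_val, halfp_val] at hcl
    omega
  · -- A C odd, B D even
    exfalso
    have hcl := hψ hac (halfp B) (halfp D) (hφ hbd)
    rw [halfp_val, halfp_val, halfp_val, halfp_val] at hcl
    omega
  · -- all odd
    refine shuffle2_mk_odd hA hB (ψ.2 _ _ _ _ ?_ ?_ ?_ hac hbd) <;>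
      · rw [Fin.lt_def, halfp_val, halfp_val]; omega

end KrewDev2
section KrewDev2b
variable {n : ℕ}

theorem clean_of_admissible {α γ : NCP n} (h : Admissible2 α γ) {w v : Fin n}
    (hwv : γ.1 w v) : cleanCond α.1 w v := by
  have key : ∀ w v a b : Fin n, γ.1 w v → α.1 a b → (w:ℕ) < v →
      (b:ℕ) ≤ w → (w:ℕ) < a → (a:ℕ) ≤ v → False := by
    intro w v a b hwv hab hlt hbw hwa hav
    have h1 : evp b < odp w := show 2*(b:ℕ) < 2*(w:ℕ)+1 by omega
    have h2 : odp w < evp a := show 2*(w:ℕ)+1 < 2*(a:ℕ) by omega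
    have h3 : evp a < odp v := show 2*(a:ℕ) < 2*(v:ℕ)+1 by omega
    exact shuffle2_evp_odp
      (h (evp b) (odp w) (evp a) (odp v) h1 h2 h3
        (shuffle2_evp_evp.mpr (α.1.symm' hab)) (shuffle2_odp_odp.mpr hwv))
  have key2 : ∀ w v a b : Fin n, γ.1 w v → α.1 a b → (w:ℕ) < v →
      (w:ℕ) < a → (a:ℕ) ≤ v → (v:ℕ) < b → False := by
    intro w v a b hwv hab hlt hwa hav hvb
    have h1 : odp w < evp a := show 2*(w:ℕ)+1 < 2*(a:ℕ) by omega
    have h2 : evp a < odp v := show 2*(a:ℕ) < 2*(v:ℕ)+1 by omega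
    have h3 : odp v < evp b := show 2*(v:ℕ)+1 < 2*(b:ℕ) by omega
    exact shuffle2_odp_evp
      (h (odp w) (evp a) (odp v) (evp b) h1 h2 h3
        (shuffle2_odp_odp.mpr hwv) (shuffle2_evp_evp.mpr hab))
  intro a b hab
  by_contra hcon
  have hwv' := γ.1.symm' hwv
  have hab' := α.1.symm' hab
  have hcases : ((w:ℕ) < v ∧
      (((w:ℕ) < a ∧ (a:ℕ) ≤ v ∧ ((b:ℕ) ≤ w ∨ (v:ℕ) < b)) ∨
       ((w:ℕ) < b ∧ (b:ℕ) ≤ v ∧ ((a:ℕ) ≤ w ∨ (v:ℕ) < a)))) ∨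
      ((v:ℕ) < w ∧
      (((v:ℕ) < a ∧ (a:ℕ) ≤ w ∧ ((b:ℕ) ≤ v ∨ (w:ℕ) < b)) ∨
       ((v:ℕ) < b ∧ (b:ℕ) ≤ w ∧ ((a:ℕ) ≤ v ∨ (w:ℕ) < a)))) := by omega
  rcases hcases with ⟨h1, ⟨h2a, h2b, h3 | h3⟩ | ⟨h2a, h2b, h3 | h3⟩⟩ |
      ⟨h1, ⟨h2a, h2b, h3 | h3⟩ | ⟨h2a, h2b, h3 | h3⟩⟩
  · exact key w v a b hwv hab h1 h3 h2a h2b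
  · exact key2 w v a b hwv hab h1 h2a h2b h3
  · exact key w v b a hwv hab' h1 h3 h2a h2b
  · exact key2 w v b a hwv hab' h1 h2a h2b h3
  · exact key v w a b hwv' hab h1 h3 h2a h2b
  · exact key2 v w a b hwv' hab h1 h2a h2b h3
  · exact key v w b a hwv' hab' h1 h3 h2a h2b
  · exact key2 v w b a hwv' hab' h1 h2a h2b h3

theorem admissible_mono {α γ φ : NCP n} (h : Admissible2 α γ) (hle : φ.1 ≤ γ.1) :
    Admissible2 α φ :=
  admissible_of_clean le_rfl (fun {w v} hwv => clean_of_admissible h (hle hwv))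

end KrewDev2b
section KrewDev3
variable {n : ℕ}

theorem evp_monotone : Monotone (evp : Fin n → Fin (2*n)) := by
  intro a b h
  have : (a:ℕ) ≤ b := h
  show 2*(a:ℕ) ≤ 2*(b:ℕ)
  omega

theorem halfp_evp (a : Fin n) : halfp (evp a) = a :=
  Fin.ext (show 2*(a:ℕ)/2 = (a:ℕ) by omega)

theorem halfp_odp (a : Fin n) : halfp (odp a) = a :=
  Fin.ext (show (2*(a:ℕ)+1)/2 = (a:ℕ) by omega)

theorem npow_two_rel (τ : NCP n) (a b : Fin n) :
    (npow 2 τ).1 (evp a) (evp b) ↔ τ.1 a b := by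
  have h : τ.1 (halfp (evp a)) (halfp (evp b)) ↔ τ.1 a b := by
    rw [halfp_evp, halfp_evp]
  exact h

theorem nroot_npow (σ : NCP n) : nroot 2 n (powSetoid 2 σ.1) = σ := by
  have hex : ∃ τ : NCP n, (npow 2 τ).1 = powSetoid 2 σ.1 := ⟨σ, rfl⟩
  unfold nroot
  rw [dif_pos hex]
  have hspec := hex.choose_spec
  apply Subtype.ext
  apply Setoid.ext
  intro a b
  have h1 := iff_of_eq (congrArg (fun s : Setoid (Fin (2*n)) => s (evp a) (evp b)) hspec)
  have h2 : (powSetoid 2 σ.1) (evp a) (evp b) ↔ σ.1 a b := npow_two_rel σ a b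
  exact ((npow_two_rel _ a b).symm.trans h1).trans h2

theorem ncSup_shuffle_eq (α γ : NCP n) :
    ncSup (shuffle2 α.1 γ.1) (intervalSetoid 2 n) = powSetoid 2 (nccS (α.1 ⊔ γ.1)) := by
  set N := nccS (α.1 ⊔ γ.1) with hN
  apply le_antisymm
  · apply sInf_le
    refine ⟨powSetoid_isNoncrossing 2 ⟨N, nccS_isNoncrossing _⟩, ?_, ?_⟩
    · refine Setoid.le_def.mpr (fun {x y} h => ?_)
      rcases shuffle2_cases h with ⟨hx, hy, hr⟩ | ⟨hx, hy, hr⟩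
      · exact show N (halfp x) (halfp y) from (le_trans le_sup_left (le_nccS _) : α.1 ≤ N) hr
      · exact show N (halfp x) (halfp y) from (le_trans le_sup_right (le_nccS _) : γ.1 ≤ N) hr
    · refine Setoid.le_def.mpr (fun {x y} h => ?_)
      have h' : halfp x = halfp y := Fin.ext h
      exact show N (halfp x) (halfp y) from h' ▸ N.refl' _
  · apply le_sInf
    rintro δ ⟨hδnc, hsh, hI⟩
    have hcnc : IsNoncrossing (Setoid.comap evp δ) :=
      isNoncrossing_comap_of_monotone evp evp_monotone hδnc
    have hδI : ∀ z : Fin (2*n), δ z (evp (halfp z)) := by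
      intro z
      exact Setoid.le_def.mp hI (show (z:ℕ)/2 = (2*((z:ℕ)/2))/2 by omega)
    have hα : α.1 ≤ Setoid.comap evp δ := Setoid.le_def.mpr (fun {a b} h =>
      show δ (evp a) (evp b) from Setoid.le_def.mp hsh (shuffle2_evp_evp.mpr h))
    have hγ : γ.1 ≤ Setoid.comap evp δ := by
      refine Setoid.le_def.mpr (fun {a b} h => ?_)
      have h1 : δ (odp a) (odp b) := Setoid.le_def.mp hsh (shuffle2_odp_odp.mpr h)
      have h2 : δ (odp a) (evp a) := by
        have := hδI (odp a); rwa [halfp_odp] at this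
      have h3 : δ (odp b) (evp b) := by
        have := hδI (odp b); rwa [halfp_odp] at this
      exact show δ (evp a) (evp b) from δ.trans' (δ.symm' h2) (δ.trans' h1 h3)
    have hNle : N ≤ Setoid.comap evp δ := nccS_le hcnc (sup_le hα hγ)
    refine Setoid.le_def.mpr (fun {x y} h => ?_)
    have h' : (Setoid.comap evp δ) (halfp x) (halfp y) :=
      Setoid.le_def.mp hNle (show N (halfp x) (halfp y) from h)
    exact δ.trans' (hδI x) (δ.trans' h' (δ.symm' (hδI y)))

theorem comp_eq (α γ : NCP n) :
    comp α γ = ⟨nccS (α.1 ⊔ γ.1), nccS_isNoncrossing _⟩ := by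
  unfold comp
  rw [ncSup_shuffle_eq α γ]
  exact nroot_npow ⟨nccS (α.1 ⊔ γ.1), nccS_isNoncrossing _⟩

end KrewDev3
section KrewDev4
variable {n : ℕ}

theorem beta_le_of {α β σ : Setoid (Fin n)} (hα : IsNoncrossing α) (hβ : IsNoncrossing β)
    (hαβ : α ≤ β) (hσnc : IsNoncrossing σ) (hασ : α ≤ σ) (hκσ : krewS α β ≤ σ) : β ≤ σ := by
  classical
  have main : ∀ μ : ℕ, ∀ x y : Fin n, n*(y:ℕ) + ((y:ℕ) - (x:ℕ)) ≤ μ →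
      (x:ℕ) < (y:ℕ) → β x y → σ x y := by
    intro μ
    induction μ with
    | zero =>
      intro x y hm hxy _
      exfalso
      have h0 := Nat.le_zero.mp hm
      omega
    | succ μ ih =>
      intro x y hm hxy hβxy
      by_cases hA : cleanCond α x y
      · exact Setoid.le_def.mp hκσ (show (krewS α β) x y from ⟨hβxy, hA⟩)
      by_cases hB : ∃ c : Fin n, (x:ℕ) < (c:ℕ) ∧ (c:ℕ) < (y:ℕ) ∧ β x c
      · obtain ⟨c, hxc, hcy, hβxc⟩ := hB
        have hβcy : β c y := β.trans' (β.symm' hβxc) hβxy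
        have hxn : (x:ℕ) < n := x.isLt
        have m1 : n*(c:ℕ) + ((c:ℕ)-(x:ℕ)) ≤ μ := by
          have hmul : n*(c:ℕ) + n ≤ n*(y:ℕ) := by
            calc n*(c:ℕ) + n = n*((c:ℕ)+1) := by ring
            _ ≤ n*(y:ℕ) := Nat.mul_le_mul_left n (by omega)
          omega
        have m2 : n*(y:ℕ) + ((y:ℕ)-(c:ℕ)) ≤ μ := by omega
        exact σ.trans' (ih x c m1 hxc hβxc) (ih c y m2 hcy hβcy)
      · -- case C
        have hkey : ∀ p q : Fin n, α p q → (x:ℕ) < p → (p:ℕ) ≤ y →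
            ¬((x:ℕ) < q ∧ (q:ℕ) ≤ y) → (p:ℕ) < y → False := by
          intro p q hpq hxp hpy hq hpy'
          have hβpq : β p q := Setoid.le_def.mp hαβ hpq
          have hβxp : β x p := by
            rcases (show (q:ℕ) = x ∨ (q:ℕ) < x ∨ (y:ℕ) < q by omega) with h | h | h
            · have hq' : q = x := Fin.ext h
              exact hq' ▸ (β.symm' hβpq)
            · have hqx : β q x := hβ q x p y (Fin.lt_def.mpr h) (Fin.lt_def.mpr hxp)
                (Fin.lt_def.mpr hpy') (β.symm' hβpq) hβxy
              exact β.trans' (β.symm' hqx) (β.symm' hβpq)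
            · exact hβ x p y q (Fin.lt_def.mpr hxp) (Fin.lt_def.mpr hpy')
                (Fin.lt_def.mpr h) hβxy hβpq
          exact hB ⟨p, hxp, hpy', hβxp⟩
        have hvio : ∃ p q : Fin n, α p q ∧ ((x:ℕ) < p ∧ (p:ℕ) ≤ y) ∧
            ¬((x:ℕ) < q ∧ (q:ℕ) ≤ y) := by
          unfold cleanCond at hA
          push_neg at hA
          obtain ⟨a, b, hab, hnot⟩ := hA
          by_cases ha : (x:ℕ) < a ∧ (a:ℕ) ≤ y
          · exact ⟨a, b, hab, ha, by omega⟩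
          · exact ⟨b, a, α.symm' hab, by omega, ha⟩
        obtain ⟨p, q, hpq, ⟨hxp, hpy⟩, hq⟩ := hvio
        have hpy' : (p:ℕ) = y := by
          by_contra hne
          exact hkey p q hpq hxp hpy hq (by omega)
        have hqy : α q y := α.symm' ((Fin.ext hpy' : p = y) ▸ hpq)
        by_cases hc2 : ∃ z : Fin n, α z y ∧ (z:ℕ) ≤ x
        · obtain ⟨z, hzy, hzx⟩ := hc2
          rcases (show (z:ℕ) = x ∨ (z:ℕ) < x by omega) with h | h
          · exact Setoid.le_def.mp hασ ((Fin.ext h : z = x) ▸ hzy)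
          · have hβzx : β z x := β.trans' (Setoid.le_def.mp hαβ hzy) (β.symm' hβxy)
            have m1 : n*(x:ℕ) + ((x:ℕ)-(z:ℕ)) ≤ μ := by
              have hmul : n*(x:ℕ) + n ≤ n*(y:ℕ) := by
                calc n*(x:ℕ)+n = n*((x:ℕ)+1) := by ring
                _ ≤ n*(y:ℕ) := Nat.mul_le_mul_left n (by omega)
              omega
            have hσzx : σ z x := ih z x m1 h hβzx
            exact σ.trans' (σ.symm' hσzx) (Setoid.le_def.mp hασ hzy)
        · push_neg at hc2
          have hyCy : y ∈ Finset.univ.filter (fun z : Fin n => α z y) :=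
            Finset.mem_filter.mpr ⟨Finset.mem_univ _, α.refl' y⟩
          obtain ⟨t, htmem, htmax'⟩ := Finset.exists_max_image
            (Finset.univ.filter (fun z : Fin n => α z y)) (fun z => (z:ℕ)) ⟨y, hyCy⟩
          have hty : α t y := (Finset.mem_filter.mp htmem).2
          have htmax : ∀ z : Fin n, α z y → (z:ℕ) ≤ t := fun z hz =>
            htmax' z (Finset.mem_filter.mpr ⟨Finset.mem_univ _, hz⟩)
          have hqt : (q:ℕ) ≤ t := htmax q hqy
          have hyq : (y:ℕ) < q := by
            have := hc2 q hqy
            omega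
          have hyt : (y:ℕ) < t := by omega
          have hxt : (x:ℕ) < t := by omega
          have hβxt : β x t := β.trans' hβxy (β.symm' (Setoid.le_def.mp hαβ hty))
          have hsub : ∀ r s : Fin n, α r s → (x:ℕ) < r → (r:ℕ) ≤ t →
              ¬((x:ℕ) < s ∧ (s:ℕ) ≤ t) → False := by
            intro r s hrs hxr hrt hs
            rcases lt_trichotomy ((r:ℕ)) ((y:ℕ)) with h | h | h
            · refine hkey r s hrs hxr (by omega) ?_ h
              rintro ⟨h1, h2⟩
              exact hs ⟨h1, by omega⟩
            · have hsy : α s y := α.symm' ((Fin.ext h : r = y) ▸ hrs)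
              exact hs ⟨hc2 s hsy, htmax s hsy⟩
            · rcases (show (s:ℕ) ≤ x ∨ (t:ℕ) < s by omega) with hsx | hts
              · rcases (show (r:ℕ) = t ∨ (r:ℕ) < t by omega) with h2 | h2
                · have hst' : α s t := α.symm' ((Fin.ext h2 : r = t) ▸ hrs)
                  have hsy : α s y := α.trans' hst' hty
                  exact absurd (hc2 s hsy) (by omega)
                · have hsy : α s y := hα s y r t (Fin.lt_def.mpr (by omega))
                    (Fin.lt_def.mpr (by omega)) (Fin.lt_def.mpr h2)
                    (α.symm' hrs) (α.symm' hty)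
                  exact absurd (hc2 s hsy) (by omega)
              · rcases (show (r:ℕ) = t ∨ (r:ℕ) < t by omega) with h2 | h2
                · have hts' : α t s := (Fin.ext h2 : r = t) ▸ hrs
                  have hsy : α s y := α.trans' (α.symm' hts') hty
                  have := htmax s hsy
                  omega
                · have hyr : α y r := hα y r t s (Fin.lt_def.mpr h) (Fin.lt_def.mpr h2)
                    (Fin.lt_def.mpr hts) (α.symm' hty) hrs
                  have hsy : α s y := α.symm' (α.trans' hyr hrs)
                  have := htmax s hsy
                  omega
          have hclean : cleanCond α x t := by
            intro r s hrs
            by_contra hcon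
            have hone : (((x:ℕ) < r ∧ (r:ℕ) ≤ t) ∧ ¬((x:ℕ) < s ∧ (s:ℕ) ≤ t)) ∨
                (((x:ℕ) < s ∧ (s:ℕ) ≤ t) ∧ ¬((x:ℕ) < r ∧ (r:ℕ) ≤ t)) := by omega
            rcases hone with ⟨⟨h1, h2⟩, h3⟩ | ⟨⟨h1, h2⟩, h3⟩
            · exact hsub r s hrs h1 h2 h3
            · exact hsub s r (α.symm' hrs) h1 h2 h3
          have hσxt : σ x t := Setoid.le_def.mp hκσ (show (krewS α β) x t from ⟨hβxt, hclean⟩)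
          exact σ.trans' hσxt (σ.symm' (Setoid.le_def.mp hασ (α.symm' hty)))
  refine Setoid.le_def.mpr (fun {x y} h => ?_)
  rcases lt_trichotomy ((x:ℕ)) ((y:ℕ)) with hlt | heq | hgt
  · exact main _ x y le_rfl hlt h
  · exact (Fin.ext heq : x = y) ▸ σ.refl' x
  · exact σ.symm' (main _ y x le_rfl hgt (β.symm' h))

end KrewDev4
section KrewDev5
variable {n : ℕ}

/-- The relative Kreweras complement as a noncrossing partition. -/
def krewNCP (α β : NCP n) : NCP n := ⟨krewS α.1 β.1, krewS_isNoncrossing β.2⟩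

theorem krewS_le_base (α β : Setoid (Fin n)) : krewS α β ≤ β :=
  Setoid.le_def.mpr (fun h => h.1)

theorem comp_krew {α β : NCP n} (h : α.1 ≤ β.1) : comp α (krewNCP α β) = β := by
  rw [comp_eq]
  apply Subtype.ext
  show nccS (α.1 ⊔ krewS α.1 β.1) = β.1
  apply le_antisymm
  · exact nccS_le β.2 (sup_le h (krewS_le_base _ _))
  · exact beta_le_of α.2 β.2 h (nccS_isNoncrossing _)
      (le_trans le_sup_left (le_nccS _)) (le_trans le_sup_right (le_nccS _))

theorem admissible_krew (α β : NCP n) : Admissible2 α (krewNCP α β) :=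
  admissible_of_clean le_rfl (fun {_ _} hwv => hwv.2)

/-- Refinement of `β` by an interval cut `(u,t]`. -/
def cutS (β : Setoid (Fin n)) (u t : Fin n) : Setoid (Fin n) where
  r p q := β p q ∧ ((u:ℕ) < p ∧ (p:ℕ) ≤ t ↔ (u:ℕ) < q ∧ (q:ℕ) ≤ t)
  iseqv := ⟨fun p => ⟨β.refl' p, Iff.rfl⟩, fun h => ⟨β.symm' h.1, h.2.symm⟩,
    fun h1 h2 => ⟨β.trans' h1.1 h2.1, h1.2.trans h2.2⟩⟩

theorem cutS_isNoncrossing {β : Setoid (Fin n)} (hβ : IsNoncrossing β) (u t : Fin n) :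
    IsNoncrossing (cutS β u t) := by
  intro a b c d hab hbc hcd hac hbd
  refine ⟨hβ a b c d hab hbc hcd hac.1 hbd.1, ?_⟩
  have h1 := hac.2
  have h2 := hbd.2
  have hab' : (a:ℕ) < b := hab
  have hbc' : (b:ℕ) < c := hbc
  have hcd' : (c:ℕ) < d := hcd
  omega

open Classical in
/-- The `γ`-class of `w` as a finset. -/
noncomputable def clsF (γ : Setoid (Fin n)) (w : Fin n) : Finset (Fin n) :=
  Finset.univ.filter (fun z => γ w z)

theorem mem_clsF {γ : Setoid (Fin n)} {w z : Fin n} : z ∈ clsF γ w ↔ γ w z := by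
  simp [clsF]

theorem self_mem_clsF {γ : Setoid (Fin n)} {w : Fin n} : w ∈ clsF γ w :=
  mem_clsF.mpr (γ.refl' w)

noncomputable def clsMax (γ : Setoid (Fin n)) (w : Fin n) : Fin n :=
  (clsF γ w).max' ⟨w, self_mem_clsF⟩

noncomputable def clsMin (γ : Setoid (Fin n)) (w : Fin n) : Fin n :=
  (clsF γ w).min' ⟨w, self_mem_clsF⟩

theorem clsMax_rel (γ : Setoid (Fin n)) (w : Fin n) : γ w (clsMax γ w) :=
  mem_clsF.mp (Finset.max'_mem _ _)

theorem clsMin_rel (γ : Setoid (Fin n)) (w : Fin n) : γ w (clsMin γ w) :=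
  mem_clsF.mp (Finset.min'_mem _ _)

theorem clsMax_ge {γ : Setoid (Fin n)} {w z : Fin n} (h : γ w z) : (z:ℕ) ≤ clsMax γ w :=
  Fin.le_def.mp (Finset.le_max' _ z (mem_clsF.mpr h))

theorem clsMin_le {γ : Setoid (Fin n)} {w z : Fin n} (h : γ w z) : ((clsMin γ w : Fin n):ℕ) ≤ z :=
  Fin.le_def.mp (Finset.min'_le _ z (mem_clsF.mpr h))

end KrewDev5
section KrewDev6
variable {n : ℕ}

theorem comp_unique {α γ β : NCP n} (hadm : Admissible2 α γ) (hc : comp α γ = β) :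
    γ = krewNCP α β := by
  classical
  rw [comp_eq] at hc
  have hβ1 : β.1 = nccS (α.1 ⊔ γ.1) := (congrArg Subtype.val hc).symm
  have hαβ : α.1 ≤ β.1 := by rw [hβ1]; exact le_trans le_sup_left (le_nccS _)
  have hγβ : γ.1 ≤ β.1 := by rw [hβ1]; exact le_trans le_sup_right (le_nccS _)
  have hγκ : γ.1 ≤ krewS α.1 β.1 := Setoid.le_def.mpr (fun {x y} h =>
    ⟨Setoid.le_def.mp hγβ h, clean_of_admissible hadm h⟩)
  refine Subtype.ext (le_antisymm hγκ ?_)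
  by_contra hcon
  have hbad : ∃ x y : Fin n, (krewS α.1 β.1) x y ∧ ¬ γ.1 x y := by
    by_contra h'
    push_neg at h'
    exact hcon (Setoid.le_def.mpr (fun {x y} h => h' x y h))
  obtain ⟨x0, y0, hk0, hg0⟩ := hbad
  set κ := krewS α.1 β.1 with hκdef
  have hκnc : IsNoncrossing κ := krewS_isNoncrossing β.2
  have hγnc : IsNoncrossing γ.1 := γ.2
  -- minimum of the κ-class of x0
  obtain ⟨c0, hc0mem, hc0min⟩ := Finset.exists_min_image
    (Finset.univ.filter (fun w : Fin n => κ x0 w)) (fun z => (z:ℕ))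
    ⟨x0, Finset.mem_filter.mpr ⟨Finset.mem_univ _, κ.refl' x0⟩⟩
  have hκc0 : κ x0 c0 := (Finset.mem_filter.mp hc0mem).2
  have hc0le : ∀ z : Fin n, κ x0 z → (c0:ℕ) ≤ z := fun z hz =>
    hc0min z (Finset.mem_filter.mpr ⟨Finset.mem_univ _, hz⟩)
  -- an element of the class not γ-related to c0
  have hy' : ∃ y', κ x0 y' ∧ ¬ γ.1 c0 y' := by
    by_cases h : γ.1 c0 x0
    · exact ⟨y0, hk0, fun hcy => hg0 (γ.1.trans' (γ.1.symm' h) hcy)⟩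
    · exact ⟨x0, κ.refl' x0, h⟩
  obtain ⟨w₁, hw₁P, hw₁g⟩ := hy'
  set m := clsMin γ.1 w₁ with hmdef
  set M := clsMax γ.1 w₁ with hMdef
  have hγw₁m : γ.1 w₁ m := clsMin_rel _ _
  have hγw₁M : γ.1 w₁ M := clsMax_rel _ _
  have hmM : γ.1 m M := γ.1.trans' (γ.1.symm' hγw₁m) hγw₁M
  have hmleM : (m:ℕ) ≤ M := clsMin_le hγw₁M
  have hclsP : ∀ z : Fin n, γ.1 w₁ z → κ x0 z := fun z hz =>
    κ.trans' hw₁P (Setoid.le_def.mp hγκ hz)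
  have hmP : κ x0 m := hclsP m hγw₁m
  have hMP : κ x0 M := hclsP M hγw₁M
  have hc0m : (c0:ℕ) < m := by
    rcases lt_or_eq_of_le (hc0le m hmP) with h | h
    · exact h
    · exfalso
      exact hw₁g (γ.1.symm' (γ.1.trans' hγw₁m (γ.1.symm' ((Fin.ext h : c0 = m) ▸ γ.1.refl' m))))
  -- maximum of class elements below m
  obtain ⟨u, huE, humax'⟩ := Finset.exists_max_image
    (Finset.univ.filter (fun w : Fin n => κ x0 w ∧ (w:ℕ) < m)) (fun z => (z:ℕ))
    ⟨c0, Finset.mem_filter.mpr ⟨Finset.mem_univ _, hκc0, hc0m⟩⟩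
  have huP : κ x0 u := (Finset.mem_filter.mp huE).2.1
  have hum : (u:ℕ) < m := (Finset.mem_filter.mp huE).2.2
  have humax : ∀ z : Fin n, κ x0 z → (z:ℕ) < m → (z:ℕ) ≤ u := fun z h1 h2 =>
    humax' z (Finset.mem_filter.mpr ⟨Finset.mem_univ _, h1, h2⟩)
  have huM : (u:ℕ) < M := by omega
  have hκuM : κ u M := κ.trans' (κ.symm' huP) hMP
  -- the cut setoid dominates α and γ
  have hασ' : α.1 ≤ cutS β.1 u M := by
    refine Setoid.le_def.mpr (fun {p q} hpq => ?_)
    refine ⟨Setoid.le_def.mp hαβ hpq, ?_⟩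
    have hcl := hκuM.2 p q hpq
    omega
  have hsub2 : ∀ p q : Fin n, γ.1 p q → ((u:ℕ) < p ∧ (p:ℕ) ≤ M) →
      ¬((u:ℕ) < q ∧ (q:ℕ) ≤ M) → False := by
    intro p q hγpq hp hq
    have hκpq : κ p q := Setoid.le_def.mp hγκ hγpq
    by_cases hpP : κ x0 p
    · have hqP : κ x0 q := κ.trans' hpP hκpq
      have hpm : ¬ (p:ℕ) < m := fun h => absurd (humax p hpP h) (by omega)
      by_cases hpC : γ.1 w₁ p
      · have hqC : γ.1 w₁ q := γ.1.trans' hpC hγpq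
        have h1 := clsMin_le hqC
        have h2 := clsMax_ge hqC
        rw [← hmdef] at h1
        rw [← hMdef] at h2
        omega
      · have hpm' : (m:ℕ) < p := by
          rcases (show (m:ℕ) = p ∨ (m:ℕ) < p by omega) with h | h
          · exact absurd ((Fin.ext h : m = p) ▸ hγw₁m) hpC
          · exact h
        have hpM : (p:ℕ) < M := by
          rcases (show (p:ℕ) = M ∨ (p:ℕ) < M by omega) with h | h
          · exact absurd ((Fin.ext h : p = M) ▸ hγw₁M) hpC
          · exact h
        rcases (show (q:ℕ) ≤ u ∨ (M:ℕ) < q by omega) with h | h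
        · -- q ≤ u < m < p < M : crossing (q, m, p, M)
          have hqm : γ.1 q m := hγnc q m p M (Fin.lt_def.mpr (by omega))
            (Fin.lt_def.mpr hpm') (Fin.lt_def.mpr hpM) (γ.1.symm' hγpq) hmM
          have hq' : γ.1 w₁ q := γ.1.trans' hγw₁m (γ.1.symm' hqm)
          have := clsMin_le hq'
          rw [← hmdef] at this
          omega
        · -- m < p < M < q : crossing (m, p, M, q)
          have hmp : γ.1 m p := hγnc m p M q (Fin.lt_def.mpr hpm')
            (Fin.lt_def.mpr hpM) (Fin.lt_def.mpr h) hmM hγpq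
          exact hpC (γ.1.trans' hγw₁m hmp)
    · have hqP : ¬ κ x0 q := fun h => hpP (κ.trans' h (κ.symm' hκpq))
      have hpM : (p:ℕ) < M := by
        rcases (show (p:ℕ) = M ∨ (p:ℕ) < M by omega) with h | h
        · exact absurd ((Fin.ext h : p = M) ▸ hMP) hpP
        · exact h
      rcases (show (q:ℕ) ≤ u ∨ (M:ℕ) < q by omega) with h | h
      · rcases (show (q:ℕ) = u ∨ (q:ℕ) < u by omega) with h2 | h2
        · exact hqP ((Fin.ext h2 : q = u) ▸ huP)
        · -- q < u < p < M : crossing in κ: (q, u, p, M)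
          have hqu : κ q u := hκnc q u p M (Fin.lt_def.mpr h2)
            (Fin.lt_def.mpr hp.1) (Fin.lt_def.mpr hpM) (κ.symm' hκpq) hκuM
          exact hqP (κ.trans' huP (κ.symm' hqu))
      · -- u < p < M < q : crossing in κ: (u, p, M, q)
        have hup : κ u p := hκnc u p M q (Fin.lt_def.mpr hp.1)
          (Fin.lt_def.mpr hpM) (Fin.lt_def.mpr h) hκuM hκpq
        exact hpP (κ.trans' huP hup)
  have hγσ' : γ.1 ≤ cutS β.1 u M := by
    refine Setoid.le_def.mpr (fun {p q} hpq => ?_)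
    refine ⟨Setoid.le_def.mp hγβ hpq, ?_⟩
    by_contra hiff
    have hone : (((u:ℕ) < p ∧ (p:ℕ) ≤ M) ∧ ¬((u:ℕ) < q ∧ (q:ℕ) ≤ M)) ∨
        (((u:ℕ) < q ∧ (q:ℕ) ≤ M) ∧ ¬((u:ℕ) < p ∧ (p:ℕ) ≤ M)) := by omega
    rcases hone with ⟨h1, h2⟩ | ⟨h1, h2⟩
    · exact hsub2 p q hpq h1 h2
    · exact hsub2 q p (γ.1.symm' hpq) h1 h2
  have hβle : β.1 ≤ cutS β.1 u M :=
    calc β.1 = nccS (α.1 ⊔ γ.1) := hβ1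
    _ ≤ cutS β.1 u M := nccS_le (cutS_isNoncrossing β.2 u M) (sup_le hασ' hγσ')
  have hcut := (Setoid.le_def.mp hβle hκuM.1).2
  omega

end KrewDev6
section KrewDev7
variable {n : ℕ}

theorem relKreweras_eq {α β : NCP n} (h : α.1 ≤ β.1) : relKreweras β α = krewNCP α β := by
  have hex : ∃ γ : NCP n, Admissible2 α γ ∧ comp α γ = β :=
    ⟨krewNCP α β, admissible_krew α β, comp_krew h⟩
  unfold relKreweras
  rw [dif_pos hex]
  exact comp_unique hex.choose_spec.1 hex.choose_spec.2

theorem krew_exchange {α γ β : NCP n} (hαγ : α.1 ≤ γ.1) (hγβ : γ.1 ≤ β.1) :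
    krewNCP γ β = krewNCP (krewNCP α γ) (krewNCP α β) := by
  set φ := krewNCP α γ with hφdef
  set δ := krewNCP γ β with hδdef
  set K := krewNCP α β with hKdef
  have hφγ : φ.1 ≤ γ.1 := krewS_le_base _ _
  have h1 : Admissible2 φ δ := admissible_of_clean hφγ (fun {_ _} hwv => hwv.2)
  have hφK : φ.1 ≤ K.1 := Setoid.le_def.mpr (fun {x y} hxy =>
    ⟨Setoid.le_def.mp hγβ hxy.1, hxy.2⟩)
  have hδK : δ.1 ≤ K.1 := Setoid.le_def.mpr (fun {x y} hxy =>
    ⟨hxy.1, fun a b hab => hxy.2 a b (Setoid.le_def.mp hαγ hab)⟩)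
  have hcompφδ_le : (comp φ δ).1 ≤ K.1 := by
    rw [comp_eq]
    exact nccS_le (krewS_isNoncrossing β.2) (sup_le hφK hδK)
  have hadm2 : Admissible2 α (comp φ δ) := admissible_mono (admissible_krew α β) hcompφδ_le
  have hcompα : comp α (comp φ δ) = β := by
    rw [comp_eq, comp_eq]
    apply Subtype.ext
    show nccS (α.1 ⊔ nccS (φ.1 ⊔ δ.1)) = β.1
    rw [nccS_sup_right, ← sup_assoc, ← nccS_sup_left]
    have h3 : nccS (α.1 ⊔ φ.1) = γ.1 :=
      congrArg Subtype.val ((comp_eq α φ).symm.trans (comp_krew hαγ))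
    rw [h3]
    exact congrArg Subtype.val ((comp_eq γ δ).symm.trans (comp_krew hγβ))
  have hKeq : comp φ δ = K := comp_unique hadm2 hcompα
  exact comp_unique h1 hKeq

end KrewDev7
/-- **Statement 18.** Functions in the incidence algebra of `(NCP(n), |)` of
the form `f(α,β) = F(K_β(α))` are stable under convolution: if
`f(α,β) = F(K_β(α))` and `g(α,β) = G(K_β(α))`, then
`(f ∗ g)(α,β) = Σ_{0_n | φ | K_β(α)} F(φ)·G(K_{K_β(α)}(φ))`,
which depends only on `K_β(α)`.  Hence they form a subalgebra, the reduced
incidence algebra. -/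
theorem reduced_incidence_subalgebra (n : ℕ) (F G : NCP n → ℚ)
    (f g : NCP n → NCP n → ℚ)
    (hf : ∀ α β : NCP n, α ≤ β → f α β = F (relKreweras β α))
    (hg : ∀ α β : NCP n, α ≤ β → g α β = G (relKreweras β α)) :
    ∀ α β : NCP n, α ≤ β →
      (∑ᶠ γ ∈ {γ : NCP n | α ≤ γ ∧ γ ≤ β}, f α γ * g γ β) =
      ∑ᶠ φ ∈ {φ : NCP n | φ ≤ relKreweras β α},
        F φ * G (relKreweras (relKreweras β α) φ) := by
  intro α β hαβ
  have hαβ' : α.1 ≤ β.1 := hαβ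
  rw [relKreweras_eq hαβ']
  have hL : ∀ γ ∈ {γ : NCP n | α ≤ γ ∧ γ ≤ β}, f α γ * g γ β =
      F (krewNCP α γ) * G (krewNCP γ β) := by
    rintro γ ⟨h1, h2⟩
    rw [hf α γ h1, hg γ β h2, relKreweras_eq (h1 : α.1 ≤ γ.1), relKreweras_eq (h2 : γ.1 ≤ β.1)]
  rw [finsum_mem_congr rfl hL]
  have hR : ∀ φ ∈ {φ : NCP n | φ ≤ krewNCP α β},
      F φ * G (relKreweras (krewNCP α β) φ) = F φ * G (krewNCP φ (krewNCP α β)) := by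
    intro φ hφ
    rw [relKreweras_eq (hφ : φ.1 ≤ (krewNCP α β).1)]
  rw [finsum_mem_congr rfl hR]
  refine finsum_mem_eq_of_bijOn (fun γ => krewNCP α γ) ⟨?_, ?_, ?_⟩ ?_
  · rintro γ ⟨h1, h2⟩
    show krewNCP α γ ≤ krewNCP α β
    exact (Setoid.le_def.mpr (fun {x y} hxy =>
      ⟨Setoid.le_def.mp (h2 : γ.1 ≤ β.1) hxy.1, hxy.2⟩) : (krewNCP α γ).1 ≤ (krewNCP α β).1)
  · rintro γ1 ⟨h1, _⟩ γ2 ⟨h2, _⟩ heq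
    have e1 : comp α (krewNCP α γ1) = γ1 := comp_krew (h1 : α.1 ≤ γ1.1)
    have e2 : comp α (krewNCP α γ2) = γ2 := comp_krew (h2 : α.1 ≤ γ2.1)
    rw [← e1, ← e2]
    exact congrArg (comp α) heq
  · rintro φ hφ
    have hφK : φ.1 ≤ (krewNCP α β).1 := hφ
    refine ⟨comp α φ, ⟨?_, ?_⟩, ?_⟩
    · show α.1 ≤ (comp α φ).1
      rw [comp_eq]
      exact le_trans le_sup_left (le_nccS _)
    · show (comp α φ).1 ≤ β.1
      rw [comp_eq]
      exact nccS_le β.2 (sup_le hαβ' (le_trans hφK (krewS_le_base _ _)))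
    · exact (comp_unique (admissible_mono (admissible_krew α β) hφK) rfl).symm
  · rintro γ ⟨h1, h2⟩
    rw [krew_exchange (h1 : α.1 ≤ γ.1) (h2 : γ.1 ≤ β.1)]
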